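/- A max-average constraint system has a solution over ℚ ∪ {-∞} if and only if the corresponding lifted system of inequalities over the field of Puiseux series has a solution in nonnegative Puiseux series. -/

import Mathlib

noncomputable section

/-- The field of (generalized) real Puiseux series, modeled as Hahn series over `ℚᵒᵈ`
(so that the leading term has the *largest* exponent, matching the "t large" convention). -/
abbrev K : Type := HahnSeries ℚᵒᵈ ℝ

/-- The leading coefficient of a Puiseux series (0 for the zero series). -/
noncomputable def leadCoeff (x : K) : ℝ := x.coeff x.order

/-- `x ≥ 0` in the ordered field of Puiseux series: leading coefficient is `≥ 0`. -/
def Knonneg (x : K) : Prop := 0 ≤ leadCoeff x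

/-- The order relation on Puiseux series. -/
def Kle (x y : K) : Prop := Knonneg (y - x)

/-- The valuation (leading exponent) of a Puiseux series, `⊥ = -∞` for the zero series. -/
noncomputable def val (x : K) : WithBot ℚ :=
  open scoped Classical in
  if x = 0 then ⊥ else (OrderDual.ofDual x.order : ℚ)

/-- The monomial `t^r`. -/
noncomputable def tmon (r : ℚ) : K := HahnSeries.single (OrderDual.toDual r) (1 : ℝ)

/-- `t^v` for `v ∈ ℚ ∪ {-∞}`, with `t^{-∞} = 0`. -/
noncomputable def tmonBot (v : WithBot ℚ) : K := WithBot.recBotCoe 0 tmon v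

/-- A max-average constraint on variables indexed by `Fin n`. -/
inductive MACon (n : ℕ) where
  /-- `x i₀ ≤ max (x (idx 0), …, x (idx (k-1)))` -/
  | maxC (i₀ : Fin n) (k : ℕ) (idx : Fin k → Fin n) : MACon n
  /-- `x i₀ ≤ (x i₁ + x i₂)/2` -/
  | avgC (i₀ i₁ i₂ : Fin n) : MACon n
  /-- `x i₀ = c` for a rational constant `c` -/
  | constC (i₀ : Fin n) (c : ℚ) : MACon n

/-- Satisfaction of a max-average constraint over `ℚ ∪ {-∞}`. -/
def SatQ {n : ℕ} (x : Fin n → WithBot ℚ) : MACon n → Prop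
  | .maxC i₀ _ idx => x i₀ ≤ Finset.univ.sup (fun j => x (idx j))
  | .avgC i₀ i₁ i₂ => x i₀ ≤ (x i₁ + x i₂).map (fun q => q / 2)
  | .constC i₀ c => x i₀ = (c : WithBot ℚ)

/-- Satisfaction of the lifted constraint over the Puiseux series field. -/
def SatK {n : ℕ} (y : Fin n → K) : MACon n → Prop
  | .maxC i₀ _ idx => Kle (y i₀) (∑ j, y (idx j))
  | .avgC i₀ i₁ i₂ => Kle ((y i₀) ^ 2) (y i₁ * y i₂)
  | .constC i₀ c => y i₀ = tmon c

/-!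
The valuation `val` turns nonnegative Puiseux series with `+`, `*` and `≤` into `ℚ ∪ {-∞}` with
`max`, `+` and `≤`: it is multiplicative, ultrametric, and monotone on nonnegative series (the
series with the larger leading exponent dominates). Hence it maps lifted solutions to tropical
ones. Conversely `v ↦ t^v` is a multiplicative strictly monotone section of `val` with values
`≥ 0`, and a sum of nonnegative terms dominates each term, so it lifts tropical solutions.
-/

open HahnSeries

theorem WithBot.le_map_half_iff {α : Type*} [Field α] [LinearOrder α] [IsStrictOrderedRing α]
    {a b : WithBot α} : a ≤ b.map (· / 2) ↔ a + a ≤ b := by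
  cases a with
  | bot => simp
  | coe p =>
    cases b with
    | bot => simp [← WithBot.coe_add]
    | coe q =>
      rw [WithBot.map_coe, ← WithBot.coe_add, WithBot.coe_le_coe, WithBot.coe_le_coe,
        le_div_iff₀ two_pos]
      constructor <;> intro h <;> linarith

theorem knonneg_iff_nonneg_toLex (x : K) : Knonneg x ↔ 0 ≤ toLex x := by
  rw [Knonneg, leadCoeff, ← leadingCoeff_eq, ← leadingCoeff_nonneg_iff, ofLex_toLex]

theorem kle_iff_toLex_le (x y : K) : Kle x y ↔ toLex x ≤ toLex y := by
  rw [Kle, knonneg_iff_nonneg_toLex, toLex_sub, sub_nonneg]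

theorem val_eq_ofDual_orderTop (x : K) : val x = WithTop.ofDual x.orderTop := by
  rcases eq_or_ne x 0 with rfl | hx
  · simp [val]
  · rw [val, if_neg hx, ← order_eq_orderTop_of_ne_zero hx]
    rfl

theorem val_mul (x y : K) : val (x * y) = val x + val y := by
  simp only [val_eq_ofDual_orderTop, orderTop_mul]
  cases x.orderTop <;> cases y.orderTop <;> rfl

theorem val_sum_le {ι : Type*} (s : Finset ι) (f : ι → K) :
    val (∑ i ∈ s, f i) ≤ s.sup fun i => val (f i) := by
  simp only [val_eq_ofDual_orderTop, ← addVal_apply (Γ := ℚᵒᵈ) (R := ℝ)]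
  rw [WithTop.ofDual_le_iff]
  refine AddValuation.map_le_sum _ fun i hi => ?_
  rw [← WithTop.ofDual_le_iff]
  exact Finset.le_sup (f := fun i => WithTop.ofDual (addVal ℚᵒᵈ ℝ (f i))) hi

theorem toLex_lt_of_val_lt {x z : K} (hx : 0 ≤ toLex x) (hz : 0 ≤ toLex z)
    (h : val x < val z) : toLex x < toLex z := by
  rw [val_eq_ofDual_orderTop, val_eq_ofDual_orderTop, WithTop.ofDual_lt_ofDual_iff] at h
  simpa [abs_of_nonneg hx, abs_of_nonneg hz] using
    abs_lt_abs_of_orderTop_ofLex (x := toLex x) (y := toLex z) h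

theorem val_le_val_of_le {x z : K} (hx : 0 ≤ toLex x) (h : toLex x ≤ toLex z) :
    val x ≤ val z :=
  not_lt.1 fun hlt => (toLex_lt_of_val_lt (hx.trans h) hx hlt).not_ge h

@[simp] theorem tmonBot_bot : tmonBot ⊥ = 0 := rfl

@[simp] theorem tmonBot_coe (r : ℚ) : tmonBot r = tmon r := rfl

theorem tmon_add (p q : ℚ) : tmon (p + q) = tmon p * tmon q := by
  simp [tmon, single_mul_single]

theorem tmonBot_add (a b : WithBot ℚ) : tmonBot (a + b) = tmonBot a * tmonBot b := by
  cases a <;> cases b <;> simp [← WithBot.coe_add, tmon_add]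

theorem val_tmonBot (v : WithBot ℚ) : val (tmonBot v) = v := by
  cases v with
  | bot => simp [val]
  | coe r => simp [val_eq_ofDual_orderTop, tmon, orderTop_single]

theorem toLex_tmon_pos (r : ℚ) : 0 < toLex (tmon r) := by
  simp [← leadingCoeff_pos_iff, tmon]

theorem toLex_tmonBot_nonneg (v : WithBot ℚ) : 0 ≤ toLex (tmonBot v) := by
  cases v with
  | bot => simp
  | coe r => exact (toLex_tmon_pos r).le

theorem strictMono_toLex_tmonBot : StrictMono fun v => toLex (tmonBot v) := fun a b h =>
  toLex_lt_of_val_lt (toLex_tmonBot_nonneg a) (toLex_tmonBot_nonneg b)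
    (by rwa [val_tmonBot, val_tmonBot])

theorem toLex_tmonBot_le_sum {ι : Type*} {s : Finset ι} {v : ι → WithBot ℚ} {a : WithBot ℚ}
    (h : a ≤ s.sup v) : toLex (tmonBot a) ≤ ∑ i ∈ s, toLex (tmonBot (v i)) := by
  rcases eq_bot_or_bot_lt a with rfl | ha
  · exact Finset.sum_nonneg fun i _ => toLex_tmonBot_nonneg (v i)
  · obtain ⟨i, hi, hai⟩ := (Finset.le_sup_iff ha).1 h
    calc toLex (tmonBot a) ≤ toLex (tmonBot (v i)) := strictMono_toLex_tmonBot.monotone hai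
      _ ≤ ∑ i ∈ s, toLex (tmonBot (v i)) :=
        Finset.single_le_sum (fun j _ => toLex_tmonBot_nonneg (v j)) hi

theorem satK_tmonBot {n : ℕ} {x : Fin n → WithBot ℚ} {c : MACon n} (h : SatQ x c) :
    SatK (fun i => tmonBot (x i)) c := by
  cases c with
  | maxC i₀ _ idx => exact (kle_iff_toLex_le _ _).2 (toLex_tmonBot_le_sum h)
  | avgC i₀ i₁ i₂ =>
    change Kle (tmonBot (x i₀) ^ 2) (tmonBot (x i₁) * tmonBot (x i₂))
    rw [kle_iff_toLex_le, sq, ← tmonBot_add, ← tmonBot_add]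
    exact strictMono_toLex_tmonBot.monotone (WithBot.le_map_half_iff.1 h)
  | constC i₀ q => exact congrArg tmonBot h

theorem satQ_val {n : ℕ} {y : Fin n → K} (hy : ∀ i, Knonneg (y i)) {c : MACon n}
    (h : SatK y c) : SatQ (fun i => val (y i)) c := by
  cases c with
  | maxC i₀ _ idx =>
    have hle := (kle_iff_toLex_le _ _).1 h
    exact (val_le_val_of_le ((knonneg_iff_nonneg_toLex _).1 (hy i₀)) hle).trans (val_sum_le _ _)
  | avgC i₀ i₁ i₂ =>
    have hsq : val (y i₀ ^ 2) ≤ val (y i₁ * y i₂) :=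
      val_le_val_of_le (sq_nonneg (toLex (y i₀))) ((kle_iff_toLex_le _ _).1 h)
    rw [sq, val_mul, val_mul] at hsq
    exact WithBot.le_map_half_iff.2 hsq
  | constC i₀ q =>
    change val (y i₀) = q
    rw [show y i₀ = tmon q from h, ← tmonBot_coe, val_tmonBot]

/-- a max-average constraint system is solvable over `ℚ ∪ {-∞}` if and only if
the lifted system is solvable in nonnegative Puiseux series. -/
theorem maxavg_solvable_iff_lifted {n : ℕ} (cs : List (MACon n)) :
    (∃ x : Fin n → WithBot ℚ, ∀ c ∈ cs, SatQ x c) ↔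
      (∃ y : Fin n → K, (∀ i, Knonneg (y i)) ∧ ∀ c ∈ cs, SatK y c) := by
  constructor
  · rintro ⟨x, hx⟩
    exact ⟨fun i => tmonBot (x i),
      fun i => (knonneg_iff_nonneg_toLex _).2 (toLex_tmonBot_nonneg _),
      fun c hc => satK_tmonBot (hx c hc)⟩
  · rintro ⟨y, hy, hsat⟩
    exact ⟨fun i => val (y i), fun c hc => satQ_val hy (hsat c hc)⟩
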